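/- For the BPSK error probability over L_fb-branch maximum ratio combining in Rayleigh fading, ε_fb(f) = ((1−ν)/2)^{L_fb} · Σ_{j=0}^{L_fb−1} C(L_fb−1+j, j)·((1+ν)/2)^j with ν = √(γ/(1+γ)) and γ = (f/L_fb)·SNR, ε_fb is a strictly decreasing function of f > 0 (for fixed SNR > 0 and integer L_fb ≥ 1), and ε_fb ∈ (0, 1/2) for all f, SNR > 0. -/

import Mathlib

open Real Finset

/-- BPSK error probability with `L`-branch maximum ratio combining in Rayleigh
fading, with `f` feedback symbols: `ν = √(γ/(1+γ))`, `γ = (f/L)·SNR`. -/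
noncomputable def epsFb (SNR : ℝ) (L : ℕ) (f : ℝ) : ℝ :=
  let γ : ℝ := (f / L) * SNR
  let ν : ℝ := Real.sqrt (γ / (1 + γ))
  ((1 - ν) / 2) ^ L *
    ∑ j ∈ Finset.range L, ((L - 1 + j).choose j : ℝ) * ((1 + ν) / 2) ^ j

/-!
In the variable `p = (1 + ν) / 2` the error probability with `L = K + 1` branches is
`G p = (1 - p) ^ (K + 1) * ∑ j ≤ K, C(K + j, j) p ^ j`. By Pascal's rule its derivative collapses to
`-(K + 1) C(2K + 1, K) (p (1 - p)) ^ K`, negative on `(0, 1)`; as `p` increases with `f`,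
`ε_fb` decreases. The derivative is invariant under `p ↦ 1 - p`, so `G p + G (1 - p)` is constant,
equal to `G 0 + G 1 = 1`. Hence `G (1/2) = 1/2` and `G 1 = 0` bound `G` on `(1/2, 1)`,
where `p` lives for `f > 0`.
-/

-- The probability that `K + 1` failures precede `K + 1` successes in Bernoulli(`p`) trials.
noncomputable def negBinomTail (K : ℕ) (p : ℝ) : ℝ :=
  (1 - p) ^ (K + 1) * ∑ j ∈ range (K + 1), ((K + j).choose j : ℝ) * p ^ j

section NegBinomTail

variable (K : ℕ)

theorem sum_range_succ_choose_mul_pow (p : ℝ) (m : ℕ) :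
    ∑ i ∈ range (m + 1), ((K + i).choose i : ℝ) * p ^ i =
      (1 - p) * ∑ i ∈ range m, ((K + 1 + i).choose i : ℝ) * p ^ i
        + ((K + 1 + m).choose m : ℝ) * p ^ m := by
  induction m with
  | zero => simp
  | succ m ih =>
    rw [sum_range_succ, ih, sum_range_succ, show K + 1 + (m + 1) = K + m + 1 + 1 by omega,
      Nat.choose_succ_succ, show K + (m + 1) = K + m + 1 by omega,
      show K + 1 + m = K + m + 1 by omega]
    push_cast
    ring

theorem hasDerivAt_sum_choose_mul_pow (p : ℝ) :
    HasDerivAt (fun x => ∑ j ∈ range (K + 1), ((K + j).choose j : ℝ) * x ^ j)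
      ((K + 1) * ∑ i ∈ range K, ((K + 1 + i).choose i : ℝ) * p ^ i) p := by
  refine (HasDerivAt.fun_sum fun j (_ : j ∈ range (K + 1)) =>
    (hasDerivAt_pow j p).const_mul ((K + j).choose j : ℝ)).congr_deriv ?_
  rw [sum_range_succ', mul_sum]
  simp only [CharP.cast_eq_zero, zero_mul, mul_zero, add_zero]
  refine sum_congr rfl fun i _ => ?_
  have h := Nat.choose_succ_right_eq (K + 1 + i) i
  rw [show K + 1 + i - i = K + 1 by omega] at h
  rw [show K + (i + 1) = K + 1 + i by omega, Nat.add_sub_cancel]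
  have h' : ((K + 1 + i).choose (i + 1) : ℝ) * (i + 1) = (K + 1 + i).choose i * (K + 1) := by
    exact_mod_cast h
  push_cast
  linear_combination p ^ i * h'

theorem hasDerivAt_negBinomTail (p : ℝ) :
    HasDerivAt (negBinomTail K)
      (-((K + 1) * (2 * K + 1).choose K * (p * (1 - p)) ^ K)) p := by
  have hq : HasDerivAt (fun x : ℝ => (1 - x) ^ (K + 1)) (-((K + 1) * (1 - p) ^ K)) p := by
    simpa using ((hasDerivAt_id p).const_sub 1).fun_pow (K + 1)
  refine (hq.mul (hasDerivAt_sum_choose_mul_pow K p)).congr_deriv ?_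
  rw [sum_range_succ_choose_mul_pow K p K, show K + 1 + K = 2 * K + 1 by omega, mul_pow]
  ring

theorem strictAntiOn_negBinomTail : StrictAntiOn (negBinomTail K) (Set.Icc 0 1) := by
  refine strictAntiOn_of_deriv_neg (convex_Icc 0 1)
    (fun p _ => (hasDerivAt_negBinomTail K p).continuousAt.continuousWithinAt) fun p hp => ?_
  rw [interior_Icc] at hp
  rw [(hasDerivAt_negBinomTail K p).deriv, neg_lt_zero]
  have : 0 < p * (1 - p) := mul_pos hp.1 (sub_pos.2 hp.2)
  have : 0 < ((2 * K + 1).choose K : ℝ) := by exact_mod_cast Nat.choose_pos (by omega)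
  positivity

theorem negBinomTail_zero : negBinomTail K 0 = 1 := by
  simp [negBinomTail, sum_range_succ']

theorem negBinomTail_one : negBinomTail K 1 = 0 := by
  simp [negBinomTail]

theorem negBinomTail_add_negBinomTail_one_sub (p : ℝ) :
    negBinomTail K p + negBinomTail K (1 - p) = 1 := by
  have hderiv (x : ℝ) :
      HasDerivAt (fun x => negBinomTail K x + negBinomTail K (1 - x)) 0 x := by
    refine ((hasDerivAt_negBinomTail K x).add
      ((hasDerivAt_negBinomTail K (1 - x)).comp x ((hasDerivAt_id x).const_sub 1))).congr_deriv ?_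
    ring
  have := is_const_of_deriv_eq_zero (fun x => (hderiv x).differentiableAt)
    (fun x => (hderiv x).deriv) p 0
  simpa [negBinomTail_zero, negBinomTail_one] using this

theorem negBinomTail_half : negBinomTail K (1 / 2) = 1 / 2 := by
  have := negBinomTail_add_negBinomTail_one_sub K (1 / 2)
  norm_num at this
  linarith

end NegBinomTail

theorem strictMonoOn_sqrt_div_one_add : StrictMonoOn (fun γ : ℝ => √(γ / (1 + γ))) (Set.Ici 0) := by
  intro a (ha : 0 ≤ a) b (hb : 0 ≤ b) hab
  refine Real.sqrt_lt_sqrt (by positivity) ?_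
  rw [div_lt_div_iff₀ (by linarith) (by linarith)]
  linarith

theorem sqrt_div_one_add_mem_Ioo {γ : ℝ} (hγ : 0 < γ) : √(γ / (1 + γ)) ∈ Set.Ioo 0 1 :=
  ⟨Real.sqrt_pos.2 (by positivity),
    (Real.sqrt_lt' one_pos).2 (by rw [one_pow, div_lt_one (by positivity)]; linarith)⟩

noncomputable def successProb (SNR : ℝ) (L : ℕ) (f : ℝ) : ℝ :=
  (1 + √(f / L * SNR / (1 + f / L * SNR))) / 2

section SuccessProb

variable {SNR : ℝ} (hSNR : 0 < SNR) {L : ℕ} (hL : 0 < L)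
include hSNR hL

theorem successProb_mem_Ioo {f : ℝ} (hf : 0 < f) : successProb SNR L f ∈ Set.Ioo (1 / 2) 1 := by
  have hL' : (0 : ℝ) < L := Nat.cast_pos.2 hL
  have := sqrt_div_one_add_mem_Ioo (by positivity : 0 < f / L * SNR)
  constructor <;> unfold successProb <;> linarith [this.1, this.2]

theorem strictMonoOn_successProb : StrictMonoOn (successProb SNR L) (Set.Ici 0) := by
  intro f₁ (hf₁ : 0 ≤ f₁) f₂ (hf₂ : 0 ≤ f₂) h
  have hL' : (0 : ℝ) < L := Nat.cast_pos.2 hL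
  have hγ : f₁ / L * SNR < f₂ / L * SNR := by gcongr
  have := strictMonoOn_sqrt_div_one_add (by positivity : (0 : ℝ) ≤ f₁ / L * SNR)
    (by positivity : (0 : ℝ) ≤ f₂ / L * SNR) hγ
  unfold successProb
  linarith

end SuccessProb

theorem epsFb_eq_negBinomTail (SNR : ℝ) (K : ℕ) (f : ℝ) :
    epsFb SNR (K + 1) f = negBinomTail K (successProb SNR (K + 1) f) := by
  simp only [epsFb, negBinomTail, successProb, Nat.add_sub_cancel]
  congr 2
  ring

theorem stmt17 (SNR : ℝ) (hSNR : 0 < SNR) (L : ℕ) (hL : 1 ≤ L) :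
    (∀ f₁ f₂ : ℝ, 0 < f₁ → f₁ < f₂ → epsFb SNR L f₂ < epsFb SNR L f₁) ∧
    (∀ f : ℝ, 0 < f → 0 < epsFb SNR L f ∧ epsFb SNR L f < 1 / 2) := by
  obtain ⟨K, rfl⟩ : ∃ K, L = K + 1 := ⟨L - 1, by omega⟩
  have hp (f : ℝ) (hf : 0 < f) := successProb_mem_Ioo hSNR K.succ_pos hf
  have hp' (f : ℝ) (hf : 0 < f) : successProb SNR (K + 1) f ∈ Set.Icc 0 1 :=
    ⟨by linarith [(hp f hf).1], (hp f hf).2.le⟩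
  simp only [epsFb_eq_negBinomTail]
  refine ⟨fun f₁ f₂ hf₁ h => ?_, fun f hf => ⟨?_, ?_⟩⟩
  · exact strictAntiOn_negBinomTail K (hp' f₁ hf₁) (hp' f₂ (hf₁.trans h))
      (strictMonoOn_successProb hSNR K.succ_pos hf₁.le (hf₁.trans h).le h)
  · exact (negBinomTail_one K).symm.trans_lt
      (strictAntiOn_negBinomTail K (hp' f hf) ⟨zero_le_one, le_rfl⟩ (hp f hf).2)
  · exact (strictAntiOn_negBinomTail K ⟨by norm_num, by norm_num⟩ (hp' f hf) (hp f hf).1).trans_eq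
      (negBinomTail_half K)
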